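/- If K ⊆ ℝ^d is a closed convex pointed cone (K ∩ (−K) ⊆ {0}), then the set K \ {0} is Capra-convex, for any choice of source norm. -/

import Mathlib

open Classical in
noncomputable def radProj {d : ℕ} (N : EuclideanSpace ℝ (Fin d) → ℝ)
    (x : EuclideanSpace ℝ (Fin d)) : EuclideanSpace ℝ (Fin d) :=
  if x = 0 then 0 else (N x)⁻¹ • x

noncomputable def capraConj {d : ℕ} (N : EuclideanSpace ℝ (Fin d) → ℝ)
    (f : EuclideanSpace ℝ (Fin d) → EReal) (y : EuclideanSpace ℝ (Fin d)) : EReal :=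
  ⨆ x : EuclideanSpace ℝ (Fin d), ((inner ℝ (radProj N x) y : ℝ) : EReal) - f x

noncomputable def capraBiconj {d : ℕ} (N : EuclideanSpace ℝ (Fin d) → ℝ)
    (f : EuclideanSpace ℝ (Fin d) → EReal) (x : EuclideanSpace ℝ (Fin d)) : EReal :=
  ⨆ y : EuclideanSpace ℝ (Fin d), ((inner ℝ (radProj N x) y : ℝ) : EReal) - capraConj N f y

open Classical in
noncomputable def ind {d : ℕ} (X : Set (EuclideanSpace ℝ (Fin d)))
    (x : EuclideanSpace ℝ (Fin d)) : EReal :=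
  if x ∈ X then 0 else ⊤

def IsCapraConvex {d : ℕ} (N : EuclideanSpace ℝ (Fin d) → ℝ)
    (X : Set (EuclideanSpace ℝ (Fin d))) : Prop :=
  ind X = capraBiconj N (ind X)

def coneHull {d : ℕ} (A : Set (EuclideanSpace ℝ (Fin d))) : Set (EuclideanSpace ℝ (Fin d)) :=
  {y | ∃ a ∈ A, ∃ l : ℝ, 0 < l ∧ y = l • a}

/-!
On `K \ {0}` the Capra biconjugate of the indicator vanishes: it is at most the indicator by
the Fenchel–Young inequality, and nonnegative by testing against `y = 0`.
Off `K \ {0}` it is `⊤` as soon as `ρ x` is strictly separated from `ρ (K \ {0})` by a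
hyperplane: scaling the normal vector makes `⟨ρ x, y⟩ - ⟨ρ z, y⟩` arbitrarily large. For
`x ∉ K` the cone `K` itself separates, since `ρ` preserves membership in a cone. For `x = 0`
(where `ρ 0 = 0`) we use that a closed pointed cone in finite dimension admits a functional
`f ≥ δ ‖·‖` on `K` (compactness of `K ∩ sphere 0 1`), and that `N ≤ C ‖·‖`, so `f ≥ δ / C`
on `ρ (K \ {0})`.
-/

open Filter Metric Set Topology

lemma Seminorm.exists_le_mul_norm_of_finiteDimensional {E : Type*} [NormedAddCommGroup E]
    [NormedSpace ℝ E] [FiniteDimensional ℝ E] (p : Seminorm ℝ E) :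
    ∃ C, 0 < C ∧ ∀ x, p x ≤ C * ‖x‖ :=
  p.bound_of_continuous_normedSpace (continuousOn_univ.1 (p.convexOn.continuousOn isOpen_univ))

section Cone

variable {E : Type*} [NormedAddCommGroup E] [NormedSpace ℝ E] {K : Set E}

lemma smul_mem_iff_of_pos (hK : ∀ l : ℝ, 0 < l → ∀ x ∈ K, l • x ∈ K) {l : ℝ} (hl : 0 < l)
    {x : E} : l • x ∈ K ↔ x ∈ K :=
  ⟨fun h => by simpa [smul_smul, inv_mul_cancel₀ hl.ne'] using hK l⁻¹ (inv_pos.2 hl) _ h,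
    hK l hl x⟩

lemma zero_mem_of_isClosed_of_smul_mem (hKc : IsClosed K)
    (hK : ∀ l : ℝ, 0 < l → ∀ x ∈ K, l • x ∈ K) (hne : K.Nonempty) : (0 : E) ∈ K := by
  obtain ⟨x, hx⟩ := hne
  have hcont : Continuous fun t : ℝ => t • x := continuous_id.smul continuous_const
  have hlim : Tendsto (fun t : ℝ => t • x) (𝓝[>] 0) (𝓝 0) :=
    (hcont.tendsto' 0 0 (zero_smul ℝ x)).mono_left nhdsWithin_le_nhds
  exact hKc.mem_of_tendsto hlim (eventually_nhdsWithin_of_forall fun t ht => hK t ht x hx)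

lemma exists_nonneg_on_cone_of_notMem (hKc : IsClosed K) (hKconv : Convex ℝ K)
    (hK : ∀ l : ℝ, 0 < l → ∀ x ∈ K, l • x ∈ K) (h0 : (0 : E) ∈ K) {x : E} (hx : x ∉ K) :
    ∃ f : StrongDual ℝ E, (∀ k ∈ K, 0 ≤ f k) ∧ f x < 0 := by
  obtain ⟨f, u, hxu, hKu⟩ := geometric_hahn_banach_point_closed hKconv hKc hx
  have hu : u < 0 := by simpa using hKu 0 h0
  refine ⟨f, fun k hk => ?_, hxu.trans hu⟩
  by_contra! hfk
  have := hKu _ (hK (u / f k) (div_pos_of_neg_of_neg hu hfk) k hk)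
  rw [map_smul, smul_eq_mul, div_mul_cancel₀ _ hfk.ne] at this
  exact this.false

/-- Separating each point of `B` from `-K` gives functionals that are nonnegative on `K` and
positive near that point; by compactness finitely many of them suffice, and their sum works. -/
lemma exists_pos_on_compact_of_pointed (hKc : IsClosed K) (hKconv : Convex ℝ K)
    (hK : ∀ l : ℝ, 0 < l → ∀ x ∈ K, l • x ∈ K) (hptd : K ∩ -K ⊆ {0}) {B : Set E}
    (hB : IsCompact B) (hBK : B ⊆ K \ {0}) :
    ∃ f : StrongDual ℝ E, (∀ k ∈ K, 0 ≤ f k) ∧ ∀ b ∈ B, 0 < f b := by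
  have hsep : ∀ b : B, ∃ f : StrongDual ℝ E, (∀ k ∈ K, 0 ≤ f k) ∧ 0 < f b := by
    rintro ⟨b, hb⟩
    obtain ⟨hbK, hb0⟩ := hBK hb
    have hnb : -b ∉ K := fun h => hb0 (hptd ⟨hbK, by simpa using h⟩)
    obtain ⟨f, hfK, hfb⟩ := exists_nonneg_on_cone_of_notMem hKc hKconv hK
      (zero_mem_of_isClosed_of_smul_mem hKc hK ⟨b, hbK⟩) hnb
    exact ⟨f, hfK, by simpa using hfb⟩
  choose F hFK hFb using hsep
  obtain ⟨t, ht⟩ := hB.elim_finite_subcover (fun b => {w | 0 < F b w})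
    (fun b => isOpen_lt continuous_const (F b).continuous)
    (fun b hb => mem_iUnion.2 ⟨⟨b, hb⟩, hFb _⟩)
  refine ⟨∑ b ∈ t, F b, fun k hk => ?_, fun w hw => ?_⟩
  · simpa using Finset.sum_nonneg fun b _ => hFK b k hk
  · obtain ⟨b, hbt, hwb⟩ := mem_iUnion₂.1 (ht hw)
    calc 0 < F b w := hwb
      _ ≤ ∑ b ∈ t, F b w := Finset.single_le_sum (fun b _ => hFK b w (hBK hw).1) hbt
      _ = (∑ b ∈ t, F b) w := by simp

lemma exists_mul_norm_le_of_pointed [FiniteDimensional ℝ E] (hKc : IsClosed K)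
    (hKconv : Convex ℝ K) (hK : ∀ l : ℝ, 0 < l → ∀ x ∈ K, l • x ∈ K) (hptd : K ∩ -K ⊆ {0}) :
    ∃ f : StrongDual ℝ E, ∃ δ > 0, ∀ k ∈ K, δ * ‖k‖ ≤ f k := by
  have hB : IsCompact (K ∩ sphere 0 1) := (isCompact_sphere 0 1).inter_left hKc
  obtain ⟨f, -, hfB⟩ := exists_pos_on_compact_of_pointed hKc hKconv hK hptd hB
    fun b hb => ⟨hb.1, ne_zero_of_mem_unit_sphere ⟨b, hb.2⟩⟩
  obtain ⟨δ, hδ, hδB⟩ := hB.exists_forall_le' f.continuous.continuousOn hfB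
  refine ⟨f, δ, hδ, fun k hk => ?_⟩
  rcases eq_or_ne k 0 with rfl | hk0
  · simp
  have hnk : 0 < ‖k‖ := norm_pos_iff.2 hk0
  have := hδB (‖k‖⁻¹ • k) ⟨(smul_mem_iff_of_pos hK (inv_pos.2 hnk)).2 hk,
    by simp [norm_smul, hnk.ne']⟩
  rwa [map_smul, smul_eq_mul, le_inv_mul_iff₀ hnk, mul_comm] at this

end Cone

section Capra

variable {d : ℕ} {N : EuclideanSpace ℝ (Fin d) → ℝ}

lemma capraConj_ind_le {X : Set (EuclideanSpace ℝ (Fin d))} {y : EuclideanSpace ℝ (Fin d)}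
    {c : ℝ} (h : ∀ z ∈ X, inner ℝ (radProj N z) y ≤ c) : capraConj N (ind X) y ≤ c := by
  refine iSup_le fun z => ?_
  by_cases hz : z ∈ X
  · simpa [ind, hz] using h z hz
  · simp [ind, hz]

lemma le_capraBiconj {f : EuclideanSpace ℝ (Fin d) → EReal} {x y : EuclideanSpace ℝ (Fin d)}
    {c : ℝ} (h : capraConj N f y ≤ c) :
    ((inner ℝ (radProj N x) y - c : ℝ) : EReal) ≤ capraBiconj N f x :=
  le_iSup_of_le y (by rw [EReal.coe_sub]; exact EReal.sub_le_sub le_rfl h)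

lemma capraBiconj_ind_le (X : Set (EuclideanSpace ℝ (Fin d))) :
    capraBiconj N (ind X) ≤ ind X := by
  intro x
  by_cases hx : x ∈ X
  · have hx0 : ind X x = 0 := if_pos hx
    rw [hx0]
    refine iSup_le fun y => EReal.sub_nonpos.2 ?_
    have := le_iSup (fun z => ((inner ℝ (radProj N z) y : ℝ) : EReal) - ind X z) x
    rwa [hx0, sub_zero] at this
  · simp [ind, hx]

lemma capraBiconj_ind_nonneg (X : Set (EuclideanSpace ℝ (Fin d)))
    (x : EuclideanSpace ℝ (Fin d)) : 0 ≤ capraBiconj N (ind X) x := by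
  simpa using le_capraBiconj (N := N) (x := x) (capraConj_ind_le (X := X) (y := 0) (c := 0)
    fun z _ => by simp)

lemma capraBiconj_ind_eq_top {X C : Set (EuclideanSpace ℝ (Fin d))} (hCconv : Convex ℝ C)
    (hCc : IsClosed C) (hXC : radProj N '' X ⊆ C) {x : EuclideanSpace ℝ (Fin d)}
    (hx : radProj N x ∉ C) : capraBiconj N (ind X) x = ⊤ := by
  obtain ⟨f, u, hCu, hux⟩ := geometric_hahn_banach_closed_point hCconv hCc hx
  set a := (InnerProductSpace.toDual ℝ (EuclideanSpace ℝ (Fin d))).symm f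
  have hinner : ∀ v t, inner ℝ v (t • a) = t * f v := fun v t => by
    rw [real_inner_smul_right, real_inner_comm, InnerProductSpace.toDual_symm_apply]
  refine (EReal.eq_top_iff_forall_lt _).2 fun r => ?_
  set t := (|r| + 1) / (f (radProj N x) - u)
  have ht : 0 < t := div_pos (by positivity) (sub_pos.2 hux)
  have hconj : capraConj N (ind X) (t • a) ≤ ((t * u : ℝ) : EReal) :=
    capraConj_ind_le fun z hz => by
      rw [hinner]
      exact mul_le_mul_of_nonneg_left (hCu _ (hXC ⟨z, hz, rfl⟩)).le ht.le
  refine lt_of_lt_of_le ?_ (le_capraBiconj (x := x) hconj)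
  have : inner ℝ (radProj N x) (t • a) - t * u = |r| + 1 := by
    rw [hinner, ← mul_sub, div_mul_cancel₀ _ (sub_pos.2 hux).ne']
  rw [this]
  exact_mod_cast (le_abs_self r).trans_lt (lt_add_one _)

lemma isCapraConvex_of_separation {X : Set (EuclideanSpace ℝ (Fin d))}
    (h : ∀ x ∉ X, ∃ C, Convex ℝ C ∧ IsClosed C ∧ radProj N '' X ⊆ C ∧ radProj N x ∉ C) :
    IsCapraConvex N X := by
  funext x
  by_cases hx : x ∈ X
  · exact le_antisymm (by simp [ind, hx, capraBiconj_ind_nonneg]) (capraBiconj_ind_le X x)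
  · obtain ⟨C, hCconv, hCc, hXC, hxC⟩ := h x hx
    simp only [ind, hx, if_false]
    exact (capraBiconj_ind_eq_top hCconv hCc hXC hxC).symm

end Capra

section RadialProjection

variable {d : ℕ} {N : EuclideanSpace ℝ (Fin d) → ℝ}

lemma radProj_mem_iff {K : Set (EuclideanSpace ℝ (Fin d))}
    (hK : ∀ l : ℝ, 0 < l → ∀ x ∈ K, l • x ∈ K) {x : EuclideanSpace ℝ (Fin d)} (hx : x ≠ 0)
    (hNx : 0 < N x) : radProj N x ∈ K ↔ x ∈ K := by
  rw [radProj, if_neg hx]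
  exact smul_mem_iff_of_pos hK (inv_pos.2 hNx)

lemma exists_pos_le_radProj {C : ℝ} (hC : 0 < C) (hNle : ∀ z, N z ≤ C * ‖z‖)
    (hNpos : ∀ z, z ≠ 0 → 0 < N z) {K : Set (EuclideanSpace ℝ (Fin d))} (hKc : IsClosed K)
    (hKconv : Convex ℝ K) (hK : ∀ l : ℝ, 0 < l → ∀ x ∈ K, l • x ∈ K) (hptd : K ∩ -K ⊆ {0}) :
    ∃ f : StrongDual ℝ (EuclideanSpace ℝ (Fin d)), ∃ ε > 0,
      ∀ z ∈ K, z ≠ 0 → ε ≤ f (radProj N z) := by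
  obtain ⟨f, δ, hδ, hf⟩ := exists_mul_norm_le_of_pointed hKc hKconv hK hptd
  refine ⟨f, δ / C, div_pos hδ hC, fun z hz hz0 => ?_⟩
  have hNz := hNpos z hz0
  rw [radProj, if_neg hz0, map_smul, smul_eq_mul, inv_mul_eq_div]
  calc δ / C ≤ δ * ‖z‖ / N z := by
        rw [div_le_div_iff₀ hC hNz]
        nlinarith [hNle z]
    _ ≤ f z / N z := div_le_div_of_nonneg_right (hf z hz) hNz.le

end RadialProjection

theorem stmt {d : ℕ} (N : EuclideanSpace ℝ (Fin d) → ℝ)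
    (hN0 : ∀ x : EuclideanSpace ℝ (Fin d), N x = 0 ↔ x = 0)
    (hNh : ∀ (a : ℝ) (x : EuclideanSpace ℝ (Fin d)), N (a • x) = |a| * N x)
    (hNt : ∀ x y : EuclideanSpace ℝ (Fin d), N (x + y) ≤ N x + N y)
    (K : Set (EuclideanSpace ℝ (Fin d))) (hKc : IsClosed K) (hKconv : Convex ℝ K)
    (hK : ∀ l : ℝ, 0 < l → ∀ x ∈ K, l • x ∈ K)
    (hptd : K ∩ (-K) ⊆ {0}) :
    IsCapraConvex N (K \ {0}) := by
  let p : Seminorm ℝ (EuclideanSpace ℝ (Fin d)) :=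
    Seminorm.of N hNt fun a x => by rw [hNh, Real.norm_eq_abs]
  have hNpos : ∀ z, z ≠ 0 → 0 < N z := fun z hz =>
    (apply_nonneg p z).lt_of_ne' (mt (hN0 z).1 hz)
  refine isCapraConvex_of_separation fun x hx => ?_
  by_cases hx0 : x = 0
  · obtain ⟨C, hC, hNle⟩ := p.exists_le_mul_norm_of_finiteDimensional
    obtain ⟨f, ε, hε, hf⟩ := exists_pos_le_radProj hC hNle hNpos hKc hKconv hK hptd
    refine ⟨{v | ε ≤ f v}, convex_halfSpace_ge f.toLinearMap.isLinear ε,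
      isClosed_le continuous_const f.continuous, ?_, by simpa [hx0, radProj] using hε⟩
    rintro _ ⟨z, ⟨hzK, hz0⟩, rfl⟩
    exact hf z hzK hz0
  · refine ⟨K, hKconv, hKc, ?_, fun hxK =>
      hx ⟨(radProj_mem_iff hK hx0 (hNpos x hx0)).1 hxK, hx0⟩⟩
    rintro _ ⟨z, ⟨hzK, hz0⟩, rfl⟩
    exact (radProj_mem_iff hK hz0 (hNpos z hz0)).2 hzK
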